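/- arXiv:2601.00379 — 6 statements merged into one kernel-verified Lean document; each statement's English description precedes it below -/
import Mathlib

section
/- Let k be a field, A an associative k-algebra, and M, N finite-dimensional A-modules such that dim_k Hom_A(M, X) = dim_k Hom_A(N, X) for every A-submodule X of N. Let r = dim_k Hom_A(M, N). Then there exists a surjective A-module homomorphism from M^r (the direct sum of r copies of M) onto N; explicitly, if f_1, …, f_r is a k-basis of Hom_A(M, N), then the map M^r → N sending (m_1, …, m_r) to Σ f_i(m_i) is surjective. -/
section aux
variable {k A : Type*} [Field k] [Ring A] [Algebra k A]
    {M N : Type*}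
    [AddCommGroup M] [Module A M] [Module k M] [IsScalarTower k A M]
    [AddCommGroup N] [Module A N] [Module k N] [IsScalarTower k A N]

/-- postcomposition with inclusion as k-linear map -/
def homIncl (X : Submodule A N) : (M →ₗ[A] X) →ₗ[k] (M →ₗ[A] N) where
  toFun g := X.subtype ∘ₗ g
  map_add' g₁ g₂ := by ext; simp
  map_smul' c g := by ext; simp

lemma homIncl_inj (X : Submodule A N) : Function.Injective (homIncl (k := k) (M := M) X) := by
  intro g₁ g₂ h
  ext x
  exact LinearMap.congr_fun h x

instance homFD [FiniteDimensional k M] [FiniteDimensional k N] :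
    FiniteDimensional k (M →ₗ[A] N) :=
  FiniteDimensional.of_injective (LinearMap.restrictScalarsₗ k A M N k)
    (LinearMap.restrictScalars_injective k)

instance subFD [FiniteDimensional k N] (X : Submodule A N) : FiniteDimensional k X :=
  inferInstanceAs (FiniteDimensional k (X.restrictScalars k))

end aux

/-- If `dim_k Hom_A(M, X) = dim_k Hom_A(N, X)` for every submodule `X`
of `N`, and `f_1, …, f_r` is a `k`-basis of `Hom_A(M, N)` (where `r = dim_k Hom_A(M, N)`),
then the map `M^r → N`, `(m_1, …, m_r) ↦ Σ f_i(m_i)`, is a surjective `A`-module map. -/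
theorem stmt2 {k A : Type*} [Field k] [Ring A] [Algebra k A]
    {M N : Type*}
    [AddCommGroup M] [Module A M] [Module k M] [IsScalarTower k A M]
    [AddCommGroup N] [Module A N] [Module k N] [IsScalarTower k A N]
    [FiniteDimensional k M] [FiniteDimensional k N]
    (hdim : ∀ X : Submodule A N,
      Module.finrank k (M →ₗ[A] X) = Module.finrank k (N →ₗ[A] X))
    (r : ℕ) (hr : r = Module.finrank k (M →ₗ[A] N))
    (f : Module.Basis (Fin r) k (M →ₗ[A] N)) :
    Function.Surjective (fun m : Fin r → M => ∑ i : Fin r, f i (m i)) := by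
  classical
  -- the map as an A-linear map
  set F : (Fin r → M) →ₗ[A] N := ∑ i : Fin r, (f i) ∘ₗ LinearMap.proj i with hF
  have hFapp : ∀ m : Fin r → M, F m = ∑ i : Fin r, f i (m i) := by
    intro m; simp [hF]
  set X : Submodule A N := LinearMap.range F with hX
  -- every A-linear map M → N has range contained in X
  have hrange : ∀ g : M →ₗ[A] N, LinearMap.range g ≤ X := by
    intro g y hy
    obtain ⟨x, rfl⟩ := hy
    refine ⟨fun i => (f.repr g i) • x, ?_⟩
    rw [hFapp]
    have : ∀ i : Fin r, f i ((f.repr g i) • x) = (f.repr g i) • (f i x) := by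
      intro i; exact (f i).map_smul_of_tower _ _
    rw [Finset.sum_congr rfl fun i _ => this i]
    have := f.sum_repr g
    calc ∑ i : Fin r, (f.repr g i) • (f i x)
        = (∑ i : Fin r, (f.repr g i) • (f i)) x := by
          rw [LinearMap.coe_sum]; simp
      _ = g x := by rw [f.sum_repr g]
  -- homIncl M X is surjective, hence bijective
  have hMXsurj : Function.Surjective (homIncl (M := M) (k := k) X) := by
    intro g
    exact ⟨LinearMap.codRestrict X g (fun x => hrange g ⟨x, rfl⟩), by ext x; rfl⟩
  have e1 : Module.finrank k (M →ₗ[A] X) = Module.finrank k (M →ₗ[A] N) :=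
    LinearEquiv.finrank_eq (LinearEquiv.ofBijective _ ⟨homIncl_inj X, hMXsurj⟩)
  -- homIncl M ⊤ and homIncl N ⊤ are bijective
  have hMTsurj : Function.Surjective (homIncl (M := M) (k := k) (⊤ : Submodule A N)) := by
    intro g
    exact ⟨LinearMap.codRestrict ⊤ g (fun x => trivial), by ext x; rfl⟩
  have hNTsurj : Function.Surjective (homIncl (M := N) (k := k) (⊤ : Submodule A N)) := by
    intro g
    exact ⟨LinearMap.codRestrict ⊤ g (fun x => trivial), by ext x; rfl⟩
  have e2 : Module.finrank k (M →ₗ[A] (⊤ : Submodule A N)) = Module.finrank k (M →ₗ[A] N) :=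
    LinearEquiv.finrank_eq (LinearEquiv.ofBijective _ ⟨homIncl_inj _, hMTsurj⟩)
  have e3 : Module.finrank k (N →ₗ[A] (⊤ : Submodule A N)) = Module.finrank k (N →ₗ[A] N) :=
    LinearEquiv.finrank_eq (LinearEquiv.ofBijective _ ⟨homIncl_inj _, hNTsurj⟩)
  -- key dimension chain
  have key : Module.finrank k (N →ₗ[A] X) = Module.finrank k (N →ₗ[A] N) := by
    rw [← hdim X, e1, ← e2, hdim ⊤, e3]
  -- hence homIncl N X is surjective
  have hNXsurj : Function.Surjective (homIncl (M := N) (k := k) X) :=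
    (LinearMap.injective_iff_surjective_of_finrank_eq_finrank key).mp (homIncl_inj X)
  obtain ⟨h, hh⟩ := hNXsurj (LinearMap.id)
  -- so X = ⊤
  intro n
  have : n ∈ X := by
    have := LinearMap.congr_fun hh n
    simp only [homIncl, LinearMap.coe_mk, AddHom.coe_mk, LinearMap.comp_apply,
      Submodule.coe_subtype, LinearMap.id_apply] at this
    rw [← this]
    exact (h n).2
  obtain ⟨m, hm⟩ := this
  refine ⟨m, ?_⟩
  simp only [← hFapp]
  exact hm
end

section
/- Let k be a field, A and B two p-tuples of n×n matrices over k that are simultaneously similar (B_i = S A_i S^{-1} for all i for some S ∈ GL_n(k)). Let R = k[y_{st,l} : s, t ∈ [n], l ∈ [p]] and let Y = (Y_1, …, Y_p) be the tuple of generic matrices Y_l = (y_{st,l}). Then for every r ∈ [n²], the k-subspace of R spanned by all r×r minors of L(B, Y) equals the k-subspace of R spanned by all r×r minors of L(A, Y). -/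
open Matrix Kronecker

/-- The `(pn²)×n²` matrix `L(A, Y)` over a commutative `k`-algebra `R`, whose `l`-th
`n²×n²` block is `A_lᵀ ⊗ I_n − I_n ⊗ Y_l`. -/
def LMat {k R : Type*} [Field k] [CommRing R] [Algebra k R] {n p : ℕ}
    (A : Fin p → Matrix (Fin n) (Fin n) k)
    (Y : Fin p → Matrix (Fin n) (Fin n) R) :
    Matrix (Fin p × Fin n × Fin n) (Fin n × Fin n) R :=
  Matrix.of fun li j =>
    ((((A li.1).map (algebraMap k R))ᵀ ⊗ₖ (1 : Matrix (Fin n) (Fin n) R)) -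
      ((1 : Matrix (Fin n) (Fin n) R) ⊗ₖ Y li.1)) li.2 j

/-- The tuple `Y = (Y_1, …, Y_p)` of generic `n×n` matrices
`Y_l = (y_{st,l})` over the polynomial ring `R = k[y_{st,l}]` in `pn²` variables. -/
noncomputable def genericY (k : Type*) [Field k] (n p : ℕ) :
    Fin p → Matrix (Fin n) (Fin n) (MvPolynomial (Fin n × Fin n × Fin p) k) :=
  fun l => Matrix.of fun s t => MvPolynomial.X (s, t, l)

/-- The `k`-subspace of `R = k[y_{st,l}]` spanned by all `r×r` minors of `L(A, Y)`,
`Y` the tuple of generic matrices. -/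
noncomputable def minorSpan {k : Type*} [Field k] {n p : ℕ}
    (A : Fin p → Matrix (Fin n) (Fin n) k) (r : ℕ) :
    Submodule k (MvPolynomial (Fin n × Fin n × Fin p) k) :=
  Submodule.span k
    {f | ∃ α : Fin r → Fin p × Fin n × Fin n, ∃ β : Fin r → Fin n × Fin n,
      Function.Injective α ∧ Function.Injective β ∧
      f = ((LMat A (genericY k n p)).submatrix α β).det}



section aux
variable {R : Type*} [CommRing R] {I : Type*} [Fintype I] [DecidableEq I] {r : ℕ}

lemma det_mul_expand_rows (X : Matrix (Fin r) I R) (W : Matrix I (Fin r) R) :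
    (X * W).det = ∑ f : Fin r → I, (∏ i, X i (f i)) * (W.submatrix f id).det := by
  have h : (X * W).det = Matrix.detRowAlternating (fun i => ∑ m : I, X i m • W m) := by
    congr 1
    ext i j
    simp [Matrix.mul_apply]
  rw [h, ← AlternatingMap.coe_multilinearMap, MultilinearMap.map_sum]
  refine Finset.sum_congr rfl fun f _ => ?_
  have := Matrix.detRowAlternating.toMultilinearMap.map_smul_univ
    (c := fun i => X i (f i)) (m := fun i => W (f i))
  exact this

lemma det_mul_expand_cols (V : Matrix (Fin r) I R) (Z : Matrix I (Fin r) R) :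
    (V * Z).det = ∑ g : Fin r → I, (∏ i, Z (g i) i) * (V.submatrix id g).det := by
  rw [← Matrix.det_transpose, Matrix.transpose_mul, det_mul_expand_rows]
  refine Finset.sum_congr rfl fun g _ => ?_
  rw [show (Vᵀ.submatrix g id) = (V.submatrix id g)ᵀ from rfl, Matrix.det_transpose]
  simp [Matrix.transpose_apply]
end aux

lemma minor_conj_mem {k : Type*} [Field k] {n p : ℕ}
    (A : Fin p → Matrix (Fin n) (Fin n) k)
    (P : Matrix (Fin p × Fin n × Fin n) (Fin p × Fin n × Fin n) k)
    (Q : Matrix (Fin n × Fin n) (Fin n × Fin n) k) {r : ℕ}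
    (α : Fin r → Fin p × Fin n × Fin n) (β : Fin r → Fin n × Fin n) :
    ((P.map (algebraMap k (MvPolynomial (Fin n × Fin n × Fin p) k)) *
        LMat A (genericY k n p) *
        Q.map (algebraMap k (MvPolynomial (Fin n × Fin n × Fin p) k))).submatrix α β).det
      ∈ minorSpan A r := by
  set R := MvPolynomial (Fin n × Fin n × Fin p) k
  set M := LMat A (genericY k n p) with hM
  set φ := algebraMap k R with hφ
  have hsub : (P.map φ * M * Q.map φ).submatrix α β
      = (P.map φ).submatrix α _root_.id *
        ((M * ((Q.map φ).submatrix _root_.id β)).submatrix _root_.id _root_.id) := by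
    rw [Matrix.submatrix_id_id, Matrix.mul_assoc,
      Matrix.submatrix_mul _ _ α _root_.id β Function.bijective_id]
    congr 1
  rw [hsub, Matrix.submatrix_id_id, det_mul_expand_rows]
  refine Submodule.sum_mem _ fun f _ => ?_
  have hcol : (M * (Q.map φ).submatrix _root_.id β).submatrix f _root_.id
      = M.submatrix f _root_.id * (Q.map φ).submatrix _root_.id β := by
    rw [Matrix.submatrix_mul _ _ f _root_.id _root_.id Function.bijective_id,
      Matrix.submatrix_id_id]
  rw [hcol, det_mul_expand_cols]
  rw [Finset.mul_sum]
  refine Submodule.sum_mem _ fun g _ => ?_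
  have hsub2 : (M.submatrix f _root_.id).submatrix _root_.id g = M.submatrix f g := rfl
  rw [hsub2]
  by_cases hf : Function.Injective f
  · by_cases hg : Function.Injective g
    · have hmem : (M.submatrix f g).det ∈ minorSpan A r :=
        Submodule.subset_span ⟨f, g, hf, hg, rfl⟩
      have h1 : (∏ i, (P.map φ).submatrix α _root_.id i (f i)) *
          ((∏ i, ((Q.map φ).submatrix _root_.id β) (g i) i) * (M.submatrix f g).det)
          = (∏ i, P (α i) (f i)) • ((∏ i, Q (g i) (β i)) • (M.submatrix f g).det) := by
        simp only [Matrix.submatrix_apply, Matrix.map_apply, _root_.id, ← map_prod,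
          Algebra.smul_def]
        rfl
      rw [h1]
      exact Submodule.smul_mem _ _ (Submodule.smul_mem _ _ hmem)
    · obtain ⟨i, j, hij, hne⟩ := Function.not_injective_iff.mp hg
      rw [Matrix.det_zero_of_column_eq hne (fun a => by rw [Matrix.submatrix_apply,
        Matrix.submatrix_apply, hij])]
      simp
  · obtain ⟨i, j, hij, hne⟩ := Function.not_injective_iff.mp hf
    rw [Matrix.det_zero_of_row_eq hne (by ext b; simp [Matrix.submatrix_apply, hij])]
    simp

lemma kron_one_map {k R : Type*} [Field k] [CommRing R] [Algebra k R] {n : ℕ}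
    (X : Matrix (Fin n) (Fin n) k) :
    (X ⊗ₖ (1 : Matrix (Fin n) (Fin n) k)).map (algebraMap k R)
      = (X.map (algebraMap k R)) ⊗ₖ (1 : Matrix (Fin n) (Fin n) R) := by
  ext ⟨a, b⟩ ⟨c, d⟩
  simp [Matrix.kroneckerMap_apply, Matrix.one_apply, apply_ite (algebraMap k R),
    Matrix.map_apply]

lemma LMat_conj {k : Type*} [Field k] {n p : ℕ}
    (A B : Fin p → Matrix (Fin n) (Fin n) k) (S : GL (Fin n) k)
    (hAB : ∀ i, B i = S.val * A i * S⁻¹.val) :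
    LMat B (genericY k n p)
      = (Matrix.of fun (li mj : Fin p × Fin n × Fin n) =>
          if li.1 = mj.1 then
            (((S⁻¹.val)ᵀ ⊗ₖ (1 : Matrix (Fin n) (Fin n) k)) li.2 mj.2) else 0).map
            (algebraMap k (MvPolynomial (Fin n × Fin n × Fin p) k))
        * LMat A (genericY k n p)
        * (((S.val)ᵀ ⊗ₖ (1 : Matrix (Fin n) (Fin n) k)).map
            (algebraMap k (MvPolynomial (Fin n × Fin n × Fin p) k))) := by
  set R := MvPolynomial (Fin n × Fin n × Fin p) k
  set φ := algebraMap k R with hφ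
  set Y := genericY k n p with hY
  have hUV : (S.val.map φ) * (S⁻¹.val.map φ) = 1 := by
    rw [← Matrix.map_mul, show S.val * S⁻¹.val = 1 from by
      rw [← Units.val_mul, mul_inv_cancel, Units.val_one]]
    exact Matrix.map_one φ (map_zero φ) (map_one φ)
  have hVU : ((S⁻¹.val)ᵀ.map φ) * ((S.val)ᵀ.map φ) = 1 := by
    rw [Matrix.transpose_map, Matrix.transpose_map, ← Matrix.transpose_mul, hUV,
      Matrix.transpose_one]
  have hblock : ∀ l : Fin p,
      (((B l).map φ)ᵀ ⊗ₖ (1 : Matrix (Fin n) (Fin n) R)) - (1 ⊗ₖ Y l)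
        = ((((S⁻¹.val)ᵀ ⊗ₖ (1 : Matrix (Fin n) (Fin n) k)).map φ))
            * ((((A l).map φ)ᵀ ⊗ₖ (1 : Matrix (Fin n) (Fin n) R)) - (1 ⊗ₖ Y l))
            * ((((S.val)ᵀ ⊗ₖ (1 : Matrix (Fin n) (Fin n) k)).map φ)) := by
    intro l
    rw [kron_one_map, kron_one_map, ← hφ]
    simp only [Matrix.mul_sub, Matrix.sub_mul, ← Matrix.mul_kronecker_mul]
    simp only [Matrix.one_mul, Matrix.mul_one]
    rw [← Matrix.mul_kronecker_mul, ← Matrix.mul_kronecker_mul]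
    simp only [Matrix.one_mul, Matrix.mul_one]
    rw [hVU]
    congr 2
    simp [hAB l, Matrix.map_mul, Matrix.transpose_mul, Matrix.transpose_map, Matrix.mul_assoc]
  refine Matrix.ext fun li j => ?_
  obtain ⟨l, i⟩ := li
  calc LMat B Y (l, i) j
      = (((((B l).map φ)ᵀ ⊗ₖ (1 : Matrix (Fin n) (Fin n) R)) - (1 ⊗ₖ Y l)
          : Matrix (Fin n × Fin n) (Fin n × Fin n) R)) i j := rfl
    _ = ((((((S⁻¹.val)ᵀ ⊗ₖ (1 : Matrix (Fin n) (Fin n) k)).map φ))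
            * ((((A l).map φ)ᵀ ⊗ₖ (1 : Matrix (Fin n) (Fin n) R)) - (1 ⊗ₖ Y l))
            * ((((S.val)ᵀ ⊗ₖ (1 : Matrix (Fin n) (Fin n) k)).map φ))
          : Matrix (Fin n × Fin n) (Fin n × Fin n) R)) i j := by
        rw [hblock l]
    _ = _ := by
        simp only [Matrix.mul_apply, Fintype.sum_prod_type, Matrix.map_apply,
          Matrix.of_apply, apply_ite φ, map_zero, ite_mul, zero_mul,
          Finset.sum_ite_irrel, Finset.sum_const_zero,
          Finset.sum_ite_eq, Finset.mem_univ, if_true, LMat]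
        rfl

/-- If `A` and `B` are simultaneously similar tuples, then for every
`r ∈ [n²]` the span of the `r×r` minors of `L(B, Y)` equals the span of the `r×r`
minors of `L(A, Y)`. -/
theorem stmt8 {k : Type*} [Field k] {n p : ℕ}
    (A B : Fin p → Matrix (Fin n) (Fin n) k)
    (hsim : ∃ S : GL (Fin n) k, ∀ i, B i = S.val * A i * S⁻¹.val) :
    ∀ r : ℕ, 1 ≤ r → r ≤ n ^ 2 → minorSpan B r = minorSpan A r := by
  obtain ⟨S, hS⟩ := hsim
  intro r _ _
  have key : ∀ (C D : Fin p → Matrix (Fin n) (Fin n) k) (T : GL (Fin n) k),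
      (∀ i, D i = T.val * C i * T⁻¹.val) → minorSpan D r ≤ minorSpan C r := by
    intro C D T hT
    rw [minorSpan, Submodule.span_le]
    rintro f ⟨α, β, hα, hβ, rfl⟩
    rw [LMat_conj C D T hT]
    exact minor_conj_mem C _ _ α β
  refine le_antisymm (key A B S hS) (key B A S⁻¹ ?_)
  intro i
  have h1 : (S⁻¹).val * S.val = 1 := by
    rw [← Units.val_mul, inv_mul_cancel, Units.val_one]
  rw [hS i, inv_inv, ← mul_assoc, ← mul_assoc, h1, one_mul, mul_assoc, h1, mul_one]
end

section
/- Let k be a field with p ≥ 1, let A = (A_1, …, A_p) be any p-tuple of n×n matrices over k, let R = k[y_{st,l}] be the polynomial ring in the pn² entries of the generic tuple Y, and let r ∈ [n²]. Then: (i) for every choice of r rows α and r columns β, the homogeneous component of degree r of the minor det L(A, Y)[α, β] equals det L(0, Y)[α, β], where 0 is the zero tuple; and (ii) there exist α, β of cardinality r with det L(0, Y)[α, β] ≠ 0, so the set of r×r minors of L(A, Y) contains a nonzero polynomial of degree exactly r. -/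
open Matrix Kronecker

open MvPolynomial


lemma hc_prod_add {σ R : Type*} [CommRing R] {r : ℕ}
    (c m : Fin r → MvPolynomial σ R)
    (hc : ∀ i, (c i).IsHomogeneous 0) (hm : ∀ i, (m i).IsHomogeneous 1) :
    homogeneousComponent r (∏ i, (c i + m i)) = ∏ i, m i := by
  rw [Finset.prod_add, map_sum]
  rw [Finset.sum_eq_single_of_mem (∅ : Finset (Fin r)) (Finset.empty_mem_powerset _)]
  · have hhom : (∏ i, m i).IsHomogeneous r := by
      have := IsHomogeneous.prod Finset.univ m (fun _ => 1) fun i _ => hm i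
      simpa using this
    simp only [Finset.prod_empty, one_mul, Finset.sdiff_empty]
    rw [homogeneousComponent_of_mem ((mem_homogeneousSubmodule _ _).2 hhom)]
    simp
  · intro t ht hne
    have h1 : ((∏ i ∈ t, c i) * ∏ i ∈ Finset.univ \ t, m i).IsHomogeneous
        ((Finset.univ \ t).card) := by
      have := (IsHomogeneous.prod t c (fun _ => 0) fun i _ => hc i).mul
        (IsHomogeneous.prod (Finset.univ \ t) m (fun _ => 1) fun i _ => hm i)
      simpa using this
    rw [homogeneousComponent_of_mem ((mem_homogeneousSubmodule _ _).2 h1)]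
    have hlt : (Finset.univ \ t).card < r := by
      rw [Finset.card_sdiff_of_subset (Finset.mem_powerset.1 ht)]
      have h2 : 0 < t.card := Finset.card_pos.2 (Finset.nonempty_iff_ne_empty.2 hne)
      have h3 : t.card ≤ r := by simpa using Finset.card_le_card (Finset.mem_powerset.1 ht)
      simp only [Finset.card_univ, Fintype.card_fin]
      omega
    rw [if_neg (by omega)]

lemma hc_det {σ R : Type*} [CommRing R] {r : ℕ}
    (Cm Nm : Matrix (Fin r) (Fin r) (MvPolynomial σ R))
    (hC : ∀ i j, (Cm i j).IsHomogeneous 0) (hN : ∀ i j, (Nm i j).IsHomogeneous 1) :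
    homogeneousComponent r (Cm + Nm).det = Nm.det := by
  rw [Matrix.det_apply, Matrix.det_apply, map_sum]
  refine Finset.sum_congr rfl fun σ' _ => ?_
  rw [Units.smul_def, Units.smul_def, map_zsmul]
  congr 1
  have : ∀ i, (Cm + Nm) (σ' i) i = Cm (σ' i) i + Nm (σ' i) i := fun i => rfl
  simp only [this]
  exact hc_prod_add _ _ (fun i => hC _ _) (fun i => hN _ _)

lemma LMat_apply_generic {k : Type*} [Field k] {n p : ℕ}
    (A : Fin p → Matrix (Fin n) (Fin n) k)
    (li : Fin p × Fin n × Fin n) (j : Fin n × Fin n) :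
    LMat A (genericY k n p) li j =
      (if li.2.2 = j.2 then C (A li.1 j.1 li.2.1) else 0) -
      (if li.2.1 = j.1 then X (li.2.2, j.2, li.1) else 0) := by
  obtain ⟨l, s, t⟩ := li; obtain ⟨u, v⟩ := j
  simp [LMat, genericY, Matrix.kroneckerMap_apply, Matrix.one_apply, Matrix.sub_apply,
    mul_ite, ite_mul, algebraMap_eq, Matrix.map_apply]

lemma LMat_zero_apply {k : Type*} [Field k] {n p : ℕ}
    (li : Fin p × Fin n × Fin n) (j : Fin n × Fin n) :
    LMat (0 : Fin p → Matrix (Fin n) (Fin n) k) (genericY k n p) li j =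
      -(if li.2.1 = j.1 then X (li.2.2, j.2, li.1) else 0) := by
  rw [LMat_apply_generic]; simp

/-- (i) For every choice of `r` rows `α` and `r` columns `β`, the
degree-`r` homogeneous component of `det L(A, Y)[α, β]` equals `det L(0, Y)[α, β]`;
(ii) there exist `α, β` with `det L(0, Y)[α, β] ≠ 0`, so the `r×r` minors of `L(A, Y)`
include a nonzero polynomial of degree exactly `r`. -/
theorem stmt10 {k : Type*} [Field k] {n p : ℕ} (hp : 1 ≤ p)
    (A : Fin p → Matrix (Fin n) (Fin n) k)
    (r : ℕ) (hr1 : 1 ≤ r) (hr2 : r ≤ n ^ 2) :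
    (∀ (α : Fin r → Fin p × Fin n × Fin n) (β : Fin r → Fin n × Fin n),
        Function.Injective α → Function.Injective β →
        MvPolynomial.homogeneousComponent r
            ((LMat A (genericY k n p)).submatrix α β).det =
          ((LMat (0 : Fin p → Matrix (Fin n) (Fin n) k)
              (genericY k n p)).submatrix α β).det) ∧
    ∃ (α : Fin r → Fin p × Fin n × Fin n) (β : Fin r → Fin n × Fin n),
      Function.Injective α ∧ Function.Injective β ∧
      ((LMat (0 : Fin p → Matrix (Fin n) (Fin n) k)
          (genericY k n p)).submatrix α β).det ≠ 0 ∧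
      ((LMat A (genericY k n p)).submatrix α β).det ≠ 0 ∧
      (((LMat A (genericY k n p)).submatrix α β).det).totalDegree = r := by
  have part1 : ∀ (α : Fin r → Fin p × Fin n × Fin n) (β : Fin r → Fin n × Fin n),
      Function.Injective α → Function.Injective β →
      MvPolynomial.homogeneousComponent r
          ((LMat A (genericY k n p)).submatrix α β).det =
        ((LMat (0 : Fin p → Matrix (Fin n) (Fin n) k)
            (genericY k n p)).submatrix α β).det := by
    intro α β hα hβ
    have hdec : (LMat A (genericY k n p)).submatrix α β =
        (Matrix.of fun i j => if (α i).2.2 = (β j).2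
            then C (A (α i).1 (β j).1 (α i).2.1) else 0) +
          (LMat (0 : Fin p → Matrix (Fin n) (Fin n) k) (genericY k n p)).submatrix α β := by
      ext i j
      simp only [Matrix.add_apply, Matrix.submatrix_apply, Matrix.of_apply,
        LMat_apply_generic, LMat_zero_apply, sub_eq_add_neg, Pi.zero_apply,
        Matrix.zero_apply, map_zero, ite_self, zero_add]
    rw [hdec, hc_det]
    · intro i j
      simp only [Matrix.of_apply]
      split
      · exact isHomogeneous_C _ _
      · exact isHomogeneous_zero _ _ _
    · intro i j
      rw [Matrix.submatrix_apply, LMat_zero_apply]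
      refine IsHomogeneous.neg ?_
      split
      · exact isHomogeneous_X _ _
      · exact isHomogeneous_zero _ _ _
  refine ⟨part1, ?_⟩
  have hnn : r ≤ n * n := by rwa [pow_two] at hr2
  set f : Fin r → Fin n × Fin n := fun i => finProdFinEquiv.symm (Fin.castLE hnn i) with hfdef
  have hf : Function.Injective f := fun a b h =>
    Fin.castLE_injective hnn (finProdFinEquiv.symm.injective h)
  set α : Fin r → Fin p × Fin n × Fin n := fun i => (⟨0, hp⟩, f i) with hαdef
  have hα : Function.Injective α := fun a b h => hf (congrArg Prod.snd h)
  set ev := (MvPolynomial.eval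
    (fun q : Fin n × Fin n × Fin p => if q.1 = q.2.1 then (1:k) else 0)) with hevdef
  have hmap : ((LMat (0 : Fin p → Matrix (Fin n) (Fin n) k)
        (genericY k n p)).submatrix α f).map ev = -(1 : Matrix (Fin r) (Fin r) k) := by
    ext i j
    simp only [Matrix.map_apply, Matrix.submatrix_apply, LMat_zero_apply,
      Matrix.neg_apply, Matrix.one_apply]
    rcases eq_or_ne i j with rfl | hij
    · simp [ev, α]
    · rw [if_neg hij, neg_zero]
      by_cases h1 : (f i).1 = (f j).1
      · by_cases h2 : (f i).2 = (f j).2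
        · exact absurd (hf (Prod.ext h1 h2)) hij
        · simp [ev, h1, h2, α]
      · have : (α i).2.1 = (f i).1 := rfl
        simp [ev, h1, α]
  have hdetmap : ev ((LMat (0 : Fin p → Matrix (Fin n) (Fin n) k)
      (genericY k n p)).submatrix α f).det = (-1 : k) ^ r := by
    rw [RingHom.map_det, RingHom.mapMatrix_apply, hmap, Matrix.det_neg, Matrix.det_one, mul_one]
    simp
  have hdet0 : ((LMat (0 : Fin p → Matrix (Fin n) (Fin n) k)
      (genericY k n p)).submatrix α f).det ≠ 0 := by
    intro h
    rw [h, map_zero] at hdetmap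
    exact pow_ne_zero r (neg_ne_zero.mpr (one_ne_zero : (1:k) ≠ 0)) hdetmap.symm
  have hcomp := part1 α f hα hf
  have hdetA : ((LMat A (genericY k n p)).submatrix α f).det ≠ 0 := by
    intro h
    rw [h, map_zero] at hcomp
    exact hdet0 hcomp.symm
  refine ⟨α, f, hα, hf, hdet0, hdetA, ?_⟩
  have hentry : ∀ i j, (((LMat A (genericY k n p)).submatrix α f) i j).totalDegree ≤ 1 := by
    intro i j
    rw [Matrix.submatrix_apply, LMat_apply_generic]
    refine le_trans (totalDegree_sub _ _) (max_le ?_ ?_)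
    · split
      · simp [totalDegree_C]
      · simp
    · split
      · simp [totalDegree_X]
      · simp
  have hle : (((LMat A (genericY k n p)).submatrix α f).det).totalDegree ≤ r := by
    rw [Matrix.det_apply]
    refine le_trans (totalDegree_finset_sum _ _) (Finset.sup_le fun σ' _ => ?_)
    refine le_trans (totalDegree_smul_le _ _) ?_
    refine le_trans (totalDegree_finset_prod _ _) ?_
    calc ∑ i, (((LMat A (genericY k n p)).submatrix α f) (σ' i) i).totalDegree
        ≤ ∑ _i : Fin r, 1 := Finset.sum_le_sum fun i _ => hentry _ _
      _ = r := by simp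
  refine le_antisymm hle ?_
  by_contra hlt
  push_neg at hlt
  rw [homogeneousComponent_eq_zero _ _ hlt] at hcomp
  exact hdet0 hcomp.symm
end

section
/- Let k be a field and m, n, p natural numbers. For a tuple A = (A_1, …, A_p) ∈ (k^{m×n})^p define f(A) = (B_1, …, B_{p+2}) ∈ (k^{(m+n)×(m+n)})^{p+2} by the block matrices B_i = [[0, A_i], [0, 0]] for i ∈ [p], B_{p+1} = [[I_m, 0], [0, 0]], and B_{p+2} = [[0, 0], [0, I_n]]. Then two tuples A, A' ∈ (k^{m×n})^p lie in the same orbit of the left-right action of GL_m(k) × GL_n(k) (i.e. there exist S ∈ GL_m(k), T ∈ GL_n(k) with A'_i = S A_i T^{-1} for all i) if and only if f(A) and f(A') are simultaneously similar under GL_{m+n}(k). -/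
open Matrix

/-- To a `p`-tuple `A` of `m×n` matrices associate the `(p+2)`-tuple
`(B_1, …, B_{p+2})` of `(m+n)×(m+n)` matrices with `B_i = [[0, A_i], [0, 0]]` for
`i ∈ [p]`, `B_{p+1} = [[I_m, 0], [0, 0]]` and `B_{p+2} = [[0, 0], [0, I_n]]`. -/
def embedRect {k : Type*} [Field k] {m n p : ℕ}
    (A : Fin p → Matrix (Fin m) (Fin n) k) :
    Fin (p + 2) → Matrix (Fin m ⊕ Fin n) (Fin m ⊕ Fin n) k :=
  Fin.snoc
    (Fin.snoc (fun i => Matrix.fromBlocks 0 (A i) 0 0)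
      (Matrix.fromBlocks 1 0 0 0))
    (Matrix.fromBlocks 0 0 0 1)

/-- Two `p`-tuples `A, A'` of `m×n` matrices lie in the same orbit of
the left-right action of `GL_m(k) × GL_n(k)` iff the associated `(p+2)`-tuples of
`(m+n)×(m+n)` matrices are simultaneously similar under `GL_{m+n}(k)`. -/
theorem stmt15 {k : Type*} [Field k] {m n p : ℕ}
    (A A' : Fin p → Matrix (Fin m) (Fin n) k) :
    (∃ (S : GL (Fin m) k) (T : GL (Fin n) k),
        ∀ i, A' i = S.val * A i * T⁻¹.val) ↔
      (∃ U : GL (Fin m ⊕ Fin n) k,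
        ∀ i, embedRect A' i = U.val * embedRect A i * U⁻¹.val) := by
  constructor
  · rintro ⟨S, T, h⟩
    have h1 : fromBlocks S.val 0 0 T.val * fromBlocks (S⁻¹).val 0 0 (T⁻¹).val = 1 := by
      simp only [fromBlocks_multiply, Matrix.mul_zero, Matrix.zero_mul, add_zero, zero_add,
        Units.mul_inv, fromBlocks_one]
    have h2 : fromBlocks (S⁻¹).val 0 0 (T⁻¹).val * fromBlocks S.val 0 0 T.val = 1 := by
      simp only [fromBlocks_multiply, Matrix.mul_zero, Matrix.zero_mul, add_zero, zero_add,
        Units.inv_mul, fromBlocks_one]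
    refine ⟨⟨_, _, h1, h2⟩, fun i => ?_⟩
    show embedRect A' i = fromBlocks S.val 0 0 T.val * embedRect A i *
      fromBlocks (S⁻¹).val 0 0 (T⁻¹).val
    refine Fin.lastCases ?_ (fun j => ?_) i
    · simp only [embedRect, Fin.snoc_last, fromBlocks_multiply, Matrix.mul_zero,
        Matrix.zero_mul, Matrix.mul_one, Matrix.one_mul, add_zero, zero_add, Units.mul_inv]
    · refine Fin.lastCases ?_ (fun l => ?_) j
      · simp only [embedRect, Fin.snoc_castSucc, Fin.snoc_last, fromBlocks_multiply,
          Matrix.mul_zero, Matrix.zero_mul, Matrix.mul_one, Matrix.one_mul, add_zero,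
          zero_add, Units.mul_inv]
      · simp only [embedRect, Fin.snoc_castSucc, fromBlocks_multiply, Matrix.mul_zero,
          Matrix.zero_mul, add_zero, zero_add, h l, Matrix.mul_assoc]
  · rintro ⟨U, h⟩
    have hU : U.val = fromBlocks U.val.toBlocks₁₁ U.val.toBlocks₁₂
        U.val.toBlocks₂₁ U.val.toBlocks₂₂ := (fromBlocks_toBlocks _).symm
    have hV : (U⁻¹).val = fromBlocks (U⁻¹).val.toBlocks₁₁ (U⁻¹).val.toBlocks₁₂
        (U⁻¹).val.toBlocks₂₁ (U⁻¹).val.toBlocks₂₂ := (fromBlocks_toBlocks _).symm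
    have hE := h ((Fin.last p).castSucc)
    have hF := h (Fin.last (p + 1))
    rw [hU, hV] at hE hF
    simp only [embedRect, Fin.snoc_castSucc, Fin.snoc_last, fromBlocks_multiply,
      Matrix.mul_zero, Matrix.zero_mul, Matrix.mul_one, Matrix.one_mul,
      add_zero, zero_add, fromBlocks_inj] at hE hF
    obtain ⟨hE11, -, -, -⟩ := hE
    obtain ⟨-, -, -, hF22⟩ := hF
    refine ⟨⟨_, _, hE11.symm, (mul_eq_one_comm).mp hE11.symm⟩,
        ⟨_, _, hF22.symm, (mul_eq_one_comm).mp hF22.symm⟩, fun i => ?_⟩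
    have hi := h (i.castSucc.castSucc)
    rw [hU, hV] at hi
    simp only [embedRect, Fin.snoc_castSucc, fromBlocks_multiply, Matrix.mul_zero,
      Matrix.zero_mul, add_zero, zero_add, fromBlocks_inj] at hi
    exact hi.2.1
end

section
/- Let k be a field and n a natural number. To a 6-tuple (x_{31}, x_{41}, x_{42}, y_{13}, y_{14}, y_{24}) of n×n matrices over k associate the pair (x, y) of 4n×4n block matrices (with n×n blocks) x = [[0,0,0,0],[I,0,0,0],[x_{31},I,0,0],[x_{41},x_{42},I,0]] and y = [[0,I,y_{13},y_{14}],[0,0,I,y_{24}],[0,0,0,I],[0,0,0,0]], where I = I_n. Then two 6-tuples A, A' ∈ (k^{n×n})^6 are simultaneously similar under GL_n(k) if and only if the associated pairs (x, y) and (x', y') are simultaneously similar under GL_{4n}(k). -/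
open Matrix

/-- Assemble a `4×4` matrix of `n×n` blocks into a `4n×4n` matrix (indexed by
`Fin 4 × Fin n`). -/
def blockMat4 {k : Type*} [Field k] {n : ℕ}
    (f : Matrix (Fin 4) (Fin 4) (Matrix (Fin n) (Fin n) k)) :
    Matrix (Fin 4 × Fin n) (Fin 4 × Fin n) k :=
  Matrix.of fun x y => f x.1 y.1 x.2 y.2

/-- The first matrix `x` of the pair associated to a `6`-tuple
`(x₃₁, x₄₁, x₄₂, y₁₃, y₁₄, y₂₄)`. -/
def pairX {k : Type*} [Field k] {n : ℕ}
    (A : Fin 6 → Matrix (Fin n) (Fin n) k) :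
    Matrix (Fin 4 × Fin n) (Fin 4 × Fin n) k :=
  blockMat4 !![0, 0, 0, 0; 1, 0, 0, 0; A 0, 1, 0, 0; A 1, A 2, 1, 0]

/-- The second matrix `y` of the pair associated to a `6`-tuple
`(x₃₁, x₄₁, x₄₂, y₁₃, y₁₄, y₂₄)`. -/
def pairY {k : Type*} [Field k] {n : ℕ}
    (A : Fin 6 → Matrix (Fin n) (Fin n) k) :
    Matrix (Fin 4 × Fin n) (Fin 4 × Fin n) k :=
  blockMat4 !![0, 1, A 3, A 4; 0, 0, 1, A 5; 0, 0, 0, 1; 0, 0, 0, 0]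

/-- Auxiliary: the forward block computation over any ring. -/
lemma stmt16_fwd_aux {R : Type*} [Ring R] (a a' : Fin 6 → R) (s s' : R)
    (hss : s * s' = 1) (ha : ∀ i, a' i = s * a i * s') :
    (!![0, 0, 0, 0; 1, 0, 0, 0; a' 0, 1, 0, 0; a' 1, a' 2, 1, 0] : Matrix (Fin 4) (Fin 4) R)
      = Matrix.diagonal (fun _ => s) * !![0, 0, 0, 0; 1, 0, 0, 0; a 0, 1, 0, 0; a 1, a 2, 1, 0]
        * Matrix.diagonal (fun _ => s')
    ∧ (!![0, 1, a' 3, a' 4; 0, 0, 1, a' 5; 0, 0, 0, 1; 0, 0, 0, 0] : Matrix (Fin 4) (Fin 4) R)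
      = Matrix.diagonal (fun _ => s) * !![0, 1, a 3, a 4; 0, 0, 1, a 5; 0, 0, 0, 1; 0, 0, 0, 0]
        * Matrix.diagonal (fun _ => s') := by
  constructor <;>
  · refine Matrix.ext fun i j => ?_
    fin_cases i <;> fin_cases j <;>
      simp [Matrix.mul_diagonal, Matrix.diagonal_mul, ha, hss, Matrix.vecHead, Matrix.vecTail]

/-- Auxiliary: the backward block computation over any ring. -/
lemma stmt16_bwd_aux {R : Type*} [Ring R] (a a' : Fin 6 → R)
    (B B' : Matrix (Fin 4) (Fin 4) R)
    (hBB' : B * B' = 1) (hB'B : B' * B = 1)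
    (hx : !![0, 0, 0, 0; 1, 0, 0, 0; a' 0, 1, 0, 0; a' 1, a' 2, 1, 0] * B
        = B * !![0, 0, 0, 0; 1, 0, 0, 0; a 0, 1, 0, 0; a 1, a 2, 1, 0])
    (hy : !![0, 1, a' 3, a' 4; 0, 0, 1, a' 5; 0, 0, 0, 1; 0, 0, 0, 0] * B
        = B * !![0, 1, a 3, a 4; 0, 0, 1, a 5; 0, 0, 0, 1; 0, 0, 0, 0]) :
    ∃ s s' : R, s * s' = 1 ∧ s' * s = 1 ∧ ∀ i, a' i * s = s * a i := by
  have hx' : ∀ i j, (!![0, 0, 0, 0; 1, 0, 0, 0; a' 0, 1, 0, 0; a' 1, a' 2, 1, 0] * B) i j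
      = (B * !![0, 0, 0, 0; 1, 0, 0, 0; a 0, 1, 0, 0; a 1, a 2, 1, 0]) i j :=
    fun i j => by rw [hx]
  have hy' : ∀ i j, (!![0, 1, a' 3, a' 4; 0, 0, 1, a' 5; 0, 0, 0, 1; 0, 0, 0, 0] * B) i j
      = (B * !![0, 1, a 3, a 4; 0, 0, 1, a 5; 0, 0, 0, 1; 0, 0, 0, 0]) i j :=
    fun i j => by rw [hy]
  have h02 := hx' 0 2; simp [Matrix.mul_apply, Fin.sum_univ_four] at h02
  have z03 : B 0 3 = 0 := h02.symm
  have h23 := hx' 2 3; simp [Matrix.mul_apply, Fin.sum_univ_four, z03] at h23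
  have h12 := hx' 1 2; simp [Matrix.mul_apply, Fin.sum_univ_four, h23] at h12
  have h33 := hx' 3 3; simp [Matrix.mul_apply, Fin.sum_univ_four, z03, h23] at h33
  have h22 := hx' 2 2; simp [Matrix.mul_apply, Fin.sum_univ_four, h12, h33] at h22
  have k20 := hy' 2 0; simp [Matrix.mul_apply, Fin.sum_univ_four] at k20
  have k10 := hy' 1 0; simp [Matrix.mul_apply, Fin.sum_univ_four, k20] at k10
  have k00 := hy' 0 0; simp [Matrix.mul_apply, Fin.sum_univ_four, k10, k20] at k00
  have k21 := hy' 2 1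
  simp [Matrix.mul_apply, Fin.sum_univ_four, Matrix.vecHead, Matrix.vecTail, k10] at k21
  have k33 := hy' 3 3; simp [Matrix.mul_apply, Fin.sum_univ_four, k20, k21] at k33
  have z32 : B 3 2 = 0 := k33.symm
  have k11 := hy' 1 1
  simp [Matrix.mul_apply, Fin.sum_univ_four, Matrix.vecHead, Matrix.vecTail,
    k21, k00, h22, h23] at k11
  have h00 := hx' 0 0; simp [Matrix.mul_apply, Fin.sum_univ_four, h12, z03] at h00
  have z01 : B 0 1 = 0 := h00.symm
  have k01 := hy' 0 1
  simp [Matrix.mul_apply, Fin.sum_univ_four, Matrix.vecHead, Matrix.vecTail,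
    k11, k21, h12, z03] at k01
  have h21 := hx' 2 1; simp [Matrix.mul_apply, Fin.sum_univ_four, z01, k01, h33] at h21
  have h32 := hx' 3 2; simp [Matrix.mul_apply, Fin.sum_univ_four, h12, h22] at h32
  have hd3 : B 3 3 = B 0 0 := h32.symm.trans h21.symm
  have h20 := hx' 2 0
  simp [Matrix.mul_apply, Fin.sum_univ_four, k00, k11, h33, ← h21] at h20
  have h30 := hx' 3 0
  simp [Matrix.mul_apply, Fin.sum_univ_four, k00, k10, k21, z32, hd3] at h30
  have h31 := hx' 3 1
  simp [Matrix.mul_apply, Fin.sum_univ_four, z01, k01, k11, z32, hd3] at h31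
  have k02 := hy' 0 2
  simp [Matrix.mul_apply, Fin.sum_univ_four, Matrix.vecHead, Matrix.vecTail,
    h22, ← h21, z32, z01] at k02
  have k03 := hy' 0 3
  simp [Matrix.mul_apply, Fin.sum_univ_four, h23, h33, hd3, z01, h12] at k03
  have k13 := hy' 1 3
  simp [Matrix.mul_apply, Fin.sum_univ_four, h33, hd3, k00, k01, h22] at k13
  have u1 : (B * B') 0 0 = (1 : Matrix (Fin 4) (Fin 4) R) 0 0 := by rw [hBB']
  simp [Matrix.mul_apply, Fin.sum_univ_four, z01, h12, z03] at u1
  have u2 : (B' * B) 0 0 = (1 : Matrix (Fin 4) (Fin 4) R) 0 0 := by rw [hB'B]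
  simp [Matrix.mul_apply, Fin.sum_univ_four, k00, k10, k20] at u2
  refine ⟨B 0 0, B' 0 0, u1, u2, fun i => ?_⟩
  fin_cases i
  exacts [h20, h30, h31, k02, k03, k13]

/-- Two `6`-tuples of `n×n` matrices are simultaneously similar under
`GL_n(k)` iff the associated pairs of `4n×4n` matrices are simultaneously similar under
`GL_{4n}(k)`. -/
theorem stmt16 {k : Type*} [Field k] {n : ℕ}
    (A A' : Fin 6 → Matrix (Fin n) (Fin n) k) :
    (∃ S : GL (Fin n) k, ∀ i, A' i = S.val * A i * S⁻¹.val) ↔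
      (∃ T : GL (Fin 4 × Fin n) k,
        pairX A' = T.val * pairX A * T⁻¹.val ∧
        pairY A' = T.val * pairY A * T⁻¹.val) := by
  set e := Matrix.compRingEquiv (Fin 4) (Fin n) k with he
  constructor
  · rintro ⟨S, hS⟩
    have hss : S.val * S⁻¹.val = 1 := S.mul_inv
    have hss' : S⁻¹.val * S.val = 1 := S.inv_mul
    obtain ⟨hx4, hy4⟩ := stmt16_fwd_aux A A' S.val S⁻¹.val hss hS
    refine ⟨Units.map e.toRingHom.toMonoidHom
      ⟨Matrix.diagonal fun _ => S.val, Matrix.diagonal fun _ => S⁻¹.val,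
        by rw [Matrix.diagonal_mul_diagonal]; simp only [hss]; exact Matrix.diagonal_one,
        by rw [Matrix.diagonal_mul_diagonal]; simp only [hss']; exact Matrix.diagonal_one⟩, ?_, ?_⟩
    · show pairX A' = e (Matrix.diagonal fun _ => S.val) * pairX A
        * e (Matrix.diagonal fun _ => S⁻¹.val)
      show e _ = e (Matrix.diagonal fun _ => S.val) * e _ * e (Matrix.diagonal fun _ => S⁻¹.val)
      rw [← _root_.map_mul, ← _root_.map_mul]
      exact congrArg e hx4
    · show pairY A' = e (Matrix.diagonal fun _ => S.val) * pairY A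
        * e (Matrix.diagonal fun _ => S⁻¹.val)
      show e _ = e (Matrix.diagonal fun _ => S.val) * e _ * e (Matrix.diagonal fun _ => S⁻¹.val)
      rw [← _root_.map_mul, ← _root_.map_mul]
      exact congrArg e hy4
  · rintro ⟨T, hX, hY⟩
    set B := e.symm T.val with hB
    set B' := e.symm T⁻¹.val with hB'
    have hBB' : B * B' = 1 := by rw [hB, hB', ← _root_.map_mul, Units.mul_inv, _root_.map_one]
    have hB'B : B' * B = 1 := by rw [hB, hB', ← _root_.map_mul, Units.inv_mul, _root_.map_one]
    have hval : (T.val : Matrix (Fin 4 × Fin n) (Fin 4 × Fin n) k) = e B :=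
      (e.apply_symm_apply _).symm
    have hval' : (T⁻¹.val : Matrix (Fin 4 × Fin n) (Fin 4 × Fin n) k) = e B' :=
      (e.apply_symm_apply _).symm
    have hx : !![0, 0, 0, 0; 1, 0, 0, 0; A' 0, 1, 0, 0; A' 1, A' 2, 1, 0] * B
        = B * !![0, 0, 0, 0; 1, 0, 0, 0; A 0, 1, 0, 0; A 1, A 2, 1, 0] := by
      apply e.injective
      rw [_root_.map_mul, _root_.map_mul, ← hval]
      show pairX A' * T.val = T.val * pairX A
      rw [hX, mul_assoc, Units.inv_mul, mul_one]
    have hy : !![0, 1, A' 3, A' 4; 0, 0, 1, A' 5; 0, 0, 0, 1; 0, 0, 0, 0] * B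
        = B * !![0, 1, A 3, A 4; 0, 0, 1, A 5; 0, 0, 0, 1; 0, 0, 0, 0] := by
      apply e.injective
      rw [_root_.map_mul, _root_.map_mul, ← hval]
      show pairY A' * T.val = T.val * pairY A
      rw [hY, mul_assoc, Units.inv_mul, mul_one]
    obtain ⟨s, s', h1, h2, hrel⟩ := stmt16_bwd_aux A A' B B' hBB' hB'B hx hy
    refine ⟨⟨s, s', h1, h2⟩, fun i => ?_⟩
    show A' i = s * A i * s'
    calc A' i = A' i * (s * s') := by rw [h1, mul_one]
    _ = A' i * s * s' := by rw [mul_assoc]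
    _ = s * A i * s' := by rw [hrel i]
end

section
/- Let k be a field, n a natural number, and for X, Y ∈ k^{n×n} define the 4n×4n block matrices (with n×n blocks) A(X,Y) = [[0,0,0,0],[I,0,0,0],[0,0,0,0],[0,I,X,0]] and B(X,Y) = [[0,0,0,0],[0,0,0,0],[I,0,0,0],[0,X,Y,0]], where I = I_n. Then for pairs (X, Y) and (X', Y') of n×n matrices: there exists S ∈ GL_n(k) with X' = S X S^{-1} and Y' = S Y S^{-1} if and only if there exists T ∈ GL_{4n}(k) with A(X',Y') = T A(X,Y) T^{-1} and B(X',Y') = T B(X,Y) T^{-1}. -/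
open Matrix

/-- The Gelfand–Ponomarev matrix `A(X,Y)`. -/
def gpA {k : Type*} [Field k] {n : ℕ} (X Y : Matrix (Fin n) (Fin n) k) :
    Matrix (Fin 4 × Fin n) (Fin 4 × Fin n) k :=
  blockMat4 !![0, 0, 0, 0; 1, 0, 0, 0; 0, 0, 0, 0; 0, 1, X, 0]

/-- The Gelfand–Ponomarev matrix `B(X,Y)`. -/
def gpB {k : Type*} [Field k] {n : ℕ} (X Y : Matrix (Fin n) (Fin n) k) :
    Matrix (Fin 4 × Fin n) (Fin 4 × Fin n) k :=
  blockMat4 !![0, 0, 0, 0; 0, 0, 0, 0; 1, 0, 0, 0; 0, X, Y, 0]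



open Kronecker

section Aux
variable {k : Type*} [Field k] {n : ℕ}

/-- Extract the `(i,j)` block of a `4n×4n` matrix. -/
def blk (T : Matrix (Fin 4 × Fin n) (Fin 4 × Fin n) k) (i j : Fin 4) :
    Matrix (Fin n) (Fin n) k := Matrix.of fun a b => T (i, a) (j, b)

lemma blk_mul (M N : Matrix (Fin 4 × Fin n) (Fin 4 × Fin n) k) (i j : Fin 4) :
    blk (M * N) i j = ∑ l, blk M i l * blk N l j := by
  ext a b
  simp [blk, Matrix.mul_apply, Matrix.sum_apply, Fintype.sum_prod_type]

lemma ext_blk {M N : Matrix (Fin 4 × Fin n) (Fin 4 × Fin n) k}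
    (h : ∀ i j, blk M i j = blk N i j) : M = N := by
  ext ⟨i, a⟩ ⟨j, b⟩
  exact congrFun (congrFun (h i j) a) b

lemma blk_one (i j : Fin 4) :
    blk (1 : Matrix (Fin 4 × Fin n) (Fin 4 × Fin n) k) i j
      = if i = j then 1 else 0 := by
  ext a b
  by_cases h : i = j <;> by_cases h' : a = b <;>
    simp [blk, Matrix.one_apply, Prod.ext_iff, h, h']

@[simp] lemma blk_blockMat4 (f : Matrix (Fin 4) (Fin 4) (Matrix (Fin n) (Fin n) k))
    (i j : Fin 4) : blk (blockMat4 f) i j = f i j := rfl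

lemma blk_kron (S : Matrix (Fin n) (Fin n) k) (i j : Fin 4) :
    blk ((1 : Matrix (Fin 4) (Fin 4) k) ⊗ₖ S) i j = if i = j then S else 0 := by
  ext a b
  by_cases h : i = j <;>
    simp [blk, Matrix.kroneckerMap_apply, Matrix.one_apply, h]

lemma conj_blk (S S' : Matrix (Fin n) (Fin n) k)
    (M : Matrix (Fin 4 × Fin n) (Fin 4 × Fin n) k) (i j : Fin 4) :
    blk (((1 : Matrix (Fin 4) (Fin 4) k) ⊗ₖ S) * M *
        ((1 : Matrix (Fin 4) (Fin 4) k) ⊗ₖ S')) i j = S * blk M i j * S' := by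
  rw [blk_mul]
  simp only [blk_mul, blk_kron]
  rw [Fin.sum_univ_four]
  fin_cases i <;> fin_cases j <;>
    simp [Fin.sum_univ_four, Matrix.mul_assoc]

set_option maxHeartbeats 1000000 in
lemma key_blocks (X Y X' Y' : Matrix (Fin n) (Fin n) k)
    (T : Matrix (Fin 4 × Fin n) (Fin 4 × Fin n) k)
    (hA : gpA X' Y' * T = T * gpA X Y) (hB : gpB X' Y' * T = T * gpB X Y) :
    blk T 0 1 = 0 ∧ blk T 0 2 = 0 ∧ blk T 0 3 = 0 ∧
    X' * blk T 0 0 = blk T 0 0 * X ∧ Y' * blk T 0 0 = blk T 0 0 * Y := by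
  have E : ∀ i j : Fin 4, blk (gpA X' Y' * T) i j = blk (T * gpA X Y) i j :=
    fun i j => by rw [hA]
  have F : ∀ i j : Fin 4, blk (gpB X' Y' * T) i j = blk (T * gpB X Y) i j :=
    fun i j => by rw [hB]
  have h01 : blk T 0 1 = 0 := by
    have := E 0 0
    simp [blk_mul, Fin.sum_univ_four, gpA, Matrix.vecHead, Matrix.vecTail] at this
    exact this.symm
  have h03 : blk T 0 3 = 0 := by
    have := E 0 1
    simp [blk_mul, Fin.sum_univ_four, gpA, Matrix.vecHead, Matrix.vecTail] at this
    exact this.symm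
  have h13 : blk T 1 3 = 0 := by
    have := E 1 1
    simp [blk_mul, Fin.sum_univ_four, gpA, Matrix.vecHead, Matrix.vecTail, h01] at this
    exact this.symm
  have h02 : blk T 0 2 = 0 := by
    have := E 1 2
    simp [blk_mul, Fin.sum_univ_four, gpA, Matrix.vecHead, Matrix.vecTail, h13] at this
    exact this
  have h21 : blk T 2 1 = 0 := by
    have := E 2 0
    simp [blk_mul, Fin.sum_univ_four, gpA, Matrix.vecHead, Matrix.vecTail] at this
    exact this.symm
  have h12 : blk T 1 2 = 0 := by
    have := F 1 0
    simp [blk_mul, Fin.sum_univ_four, gpB, Matrix.vecHead, Matrix.vecTail] at this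
    exact this.symm
  have h11 : blk T 1 1 = blk T 0 0 := by
    have := E 1 0
    simp [blk_mul, Fin.sum_univ_four, gpA, Matrix.vecHead, Matrix.vecTail] at this
    exact this.symm
  have h22 : blk T 2 2 = blk T 0 0 := by
    have := F 2 0
    simp [blk_mul, Fin.sum_univ_four, gpB, Matrix.vecHead, Matrix.vecTail] at this
    exact this.symm
  have h33 : blk T 3 3 = blk T 0 0 := by
    have := E 3 1
    simp [blk_mul, Fin.sum_univ_four, gpA, Matrix.vecHead, Matrix.vecTail, h21, h11] at this
    exact this.symm
  have hX : X' * blk T 0 0 = blk T 0 0 * X := by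
    have := F 3 1
    simp [blk_mul, Fin.sum_univ_four, gpB, Matrix.vecHead, Matrix.vecTail, h21, h11, h33] at this
    exact this
  have hY : Y' * blk T 0 0 = blk T 0 0 * Y := by
    have := F 3 2
    simp [blk_mul, Fin.sum_univ_four, gpB, Matrix.vecHead, Matrix.vecTail, h12, h22, h33] at this
    exact this
  exact ⟨h01, h02, h03, hX, hY⟩

end Aux

set_option maxHeartbeats 1000000 in
/-- Pairs `(X, Y)` and `(X', Y')` of `n×n` matrices are simultaneously
similar under `GL_n(k)` iff the Gelfand–Ponomarev pairs `(A(X,Y), B(X,Y))` and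
`(A(X',Y'), B(X',Y'))` are simultaneously similar under `GL_{4n}(k)`. -/
theorem stmt18 {k : Type*} [Field k] {n : ℕ}
    (X Y X' Y' : Matrix (Fin n) (Fin n) k) :
    (∃ S : GL (Fin n) k,
        X' = S.val * X * S⁻¹.val ∧ Y' = S.val * Y * S⁻¹.val) ↔
      (∃ T : GL (Fin 4 × Fin n) k,
        gpA X' Y' = T.val * gpA X Y * T⁻¹.val ∧
        gpB X' Y' = T.val * gpB X Y * T⁻¹.val) := by
  constructor
  · rintro ⟨S, hX, hY⟩
    obtain ⟨s, s', hss', hs's⟩ := S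
    simp only [Units.inv_mk, Units.val_mk] at hX hY
    refine ⟨⟨(1 : Matrix (Fin 4) (Fin 4) k) ⊗ₖ s,
             (1 : Matrix (Fin 4) (Fin 4) k) ⊗ₖ s', ?_, ?_⟩, ?_, ?_⟩
    · rw [← Matrix.mul_kronecker_mul, Matrix.one_mul, hss',
        Matrix.one_kronecker_one]
    · rw [← Matrix.mul_kronecker_mul, Matrix.one_mul, hs's,
        Matrix.one_kronecker_one]
    · show gpA X' Y' = ((1 : Matrix (Fin 4) (Fin 4) k) ⊗ₖ s) * gpA X Y *
        ((1 : Matrix (Fin 4) (Fin 4) k) ⊗ₖ s')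
      apply ext_blk; intro i j
      rw [conj_blk]
      fin_cases i <;> fin_cases j <;>
        simp [gpA, Matrix.vecHead, Matrix.vecTail, hss', ← hX]
    · show gpB X' Y' = ((1 : Matrix (Fin 4) (Fin 4) k) ⊗ₖ s) * gpB X Y *
        ((1 : Matrix (Fin 4) (Fin 4) k) ⊗ₖ s')
      apply ext_blk; intro i j
      rw [conj_blk]
      fin_cases i <;> fin_cases j <;>
        simp [gpB, Matrix.vecHead, Matrix.vecTail, hss', ← hX, ← hY]
  · rintro ⟨T, hA, hB⟩
    obtain ⟨t, t', htt', ht't⟩ := T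
    simp only [Units.inv_mk, Units.val_mk] at hA hB
    have hA1 : gpA X' Y' * t = t * gpA X Y := by
      rw [hA, Matrix.mul_assoc, Matrix.mul_assoc, ht't, Matrix.mul_one]
    have hB1 : gpB X' Y' * t = t * gpB X Y := by
      rw [hB, Matrix.mul_assoc, Matrix.mul_assoc, ht't, Matrix.mul_one]
    have hA2 : gpA X Y * t' = t' * gpA X' Y' := by
      rw [hA, ← Matrix.mul_assoc, ← Matrix.mul_assoc, ht't, Matrix.one_mul]
    have hB2 : gpB X Y * t' = t' * gpB X' Y' := by
      rw [hB, ← Matrix.mul_assoc, ← Matrix.mul_assoc, ht't, Matrix.one_mul]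
    obtain ⟨t1, t2, t3, htX, htY⟩ := key_blocks X Y X' Y' t hA1 hB1
    obtain ⟨u1, u2, u3, -, -⟩ := key_blocks X' Y' X Y t' hA2 hB2
    have hSS' : blk t 0 0 * blk t' 0 0 = 1 := by
      have := congrArg (fun M => blk M 0 0) htt'
      simpa [blk_mul, Fin.sum_univ_four, t1, t2, t3, blk_one] using this
    have hS'S : blk t' 0 0 * blk t 0 0 = 1 := by
      have := congrArg (fun M => blk M 0 0) ht't
      simpa [blk_mul, Fin.sum_univ_four, u1, u2, u3, blk_one] using this
    refine ⟨⟨blk t 0 0, blk t' 0 0, hSS', hS'S⟩, ?_, ?_⟩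
    · show X' = blk t 0 0 * X * blk t' 0 0
      calc X' = X' * (blk t 0 0 * blk t' 0 0) := by rw [hSS', Matrix.mul_one]
        _ = (X' * blk t 0 0) * blk t' 0 0 := by rw [Matrix.mul_assoc]
        _ = blk t 0 0 * X * blk t' 0 0 := by rw [htX]
    · show Y' = blk t 0 0 * Y * blk t' 0 0
      calc Y' = Y' * (blk t 0 0 * blk t' 0 0) := by rw [hSS', Matrix.mul_one]
        _ = (Y' * blk t 0 0) * blk t' 0 0 := by rw [Matrix.mul_assoc]
        _ = blk t 0 0 * Y * blk t' 0 0 := by rw [htY]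
end
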